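/- Let C be a conjugation on H, M a closed proper subspace of H, and V : M → H a C-symmetric contraction. Let K̃ : M⊥ → H be any contraction with range contained in 𝔇_{V*} satisfying K̃*(D_{V*}(C h)) = P⊥(C(V h)) for all h ∈ M (i.e. K̃* extends the operator X₀ : D_{V*}(C h) ↦ P⊥(C(V h))). Then the operator W̃ defined by W̃ x = (1/2)(Ṽ_{K̃} x + C(Ṽ_{K̃}*(C x))), where Ṽ_{K̃} x = V(P_M x) + D_{V*}(K̃(P⊥ x)), is a C-self-adjoint contraction on H extending V. -/

import Mathlib

local notation "⟪" x ", " y "⟫" => @inner ℂ _ _ x y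

/-- A conjugation on a complex inner product space: additive, conjugate-homogeneous,
isometric and involutive. -/
def IsConjugation {H : Type*} [NormedAddCommGroup H] [InnerProductSpace ℂ H]
    (C : H → H) : Prop :=
  (∀ x y, C (x + y) = C x + C y) ∧
  (∀ (a : ℂ) (x : H), C (a • x) = (starRingEnd ℂ) a • C x) ∧
  (∀ x, ‖C x‖ = ‖x‖) ∧
  (∀ x, C (C x) = x)

section Aux

variable {H : Type*} [NormedAddCommGroup H] [InnerProductSpace ℂ H]

lemma IsConjugation.neg {C : H → H} (hC : IsConjugation C) (x : H) : C (-x) = -C x := by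
  have := hC.2.1 (-1) x
  simpa using this

lemma IsConjugation.inner_conj {C : H → H} (hC : IsConjugation C) (u v : H) :
    ⟪C u, C v⟫ = ⟪v, u⟫ := by
  obtain ⟨hadd, hsmul, hnorm, hinv⟩ := hC
  have hsub : ∀ x y : H, C (x - y) = C x - C y := by
    intro x y
    rw [sub_eq_add_neg, hadd, IsConjugation.neg ⟨hadd, hsmul, hnorm, hinv⟩, sub_eq_add_neg]
  have hI : ∀ x : H, C (Complex.I • x) = -(Complex.I • C x) := by
    intro x
    rw [hsmul]
    simp [Complex.conj_I]
  rw [inner_eq_sum_norm_sq_div_four (𝕜 := ℂ), inner_eq_sum_norm_sq_div_four (𝕜 := ℂ)]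
  have h1 : ‖C u + C v‖ = ‖v + u‖ := by rw [← hadd, hnorm, add_comm]
  have h2 : ‖C u - C v‖ = ‖v - u‖ := by rw [← hsub, hnorm, norm_sub_rev]
  have h3 : ‖C u - Complex.I • C v‖ = ‖v - Complex.I • u‖ := by
    have : C u - Complex.I • C v = C (u + Complex.I • v) := by
      rw [hadd, hI, sub_eq_add_neg]
    rw [this, hnorm]
    have : u + Complex.I • v = Complex.I • (v - Complex.I • u) := by
      rw [smul_sub, smul_smul]
      simp [Complex.I_mul_I]
      abel
    rw [this, norm_smul]
    simp
  have h4 : ‖C u + Complex.I • C v‖ = ‖v + Complex.I • u‖ := by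
    have : C u + Complex.I • C v = C (u - Complex.I • v) := by
      rw [hsub, hI, sub_neg_eq_add]
    rw [this, hnorm]
    have : u - Complex.I • v = -(Complex.I • (v + Complex.I • u)) := by
      rw [smul_add, smul_smul]
      simp [Complex.I_mul_I]
      abel
    rw [this, norm_neg, norm_smul]
    simp
  simp only [show (RCLike.I : ℂ) = Complex.I from rfl]
  rw [h1, h2, h3, h4]

variable [CompleteSpace H]

/-- The conjugate `C A C` of a bounded operator by a conjugation. -/
noncomputable def conjOp (C : H → H) (hC : IsConjugation C) (A : H →L[ℂ] H) : H →L[ℂ] H :=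
  LinearMap.mkContinuous
    { toFun := fun x => C (A (C x))
      map_add' := by
        intro x y
        show C (A (C (x + y))) = C (A (C x)) + C (A (C y))
        rw [hC.1, map_add, hC.1]
      map_smul' := by
        intro a x
        show C (A (C (a • x))) = a • C (A (C x))
        rw [hC.2.1, map_smul, hC.2.1, Complex.conj_conj] }
    ‖A‖ (fun x => by
      simp only [LinearMap.coe_mk, AddHom.coe_mk]
      rw [hC.2.2.1]
      calc ‖A (C x)‖ ≤ ‖A‖ * ‖C x‖ := A.le_opNorm _
        _ = ‖A‖ * ‖x‖ := by rw [hC.2.2.1])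

lemma conjOp_apply (C : H → H) (hC : IsConjugation C) (A : H →L[ℂ] H) (x : H) :
    conjOp C hC A x = C (A (C x)) := rfl

lemma conjOp_norm_le (C : H → H) (hC : IsConjugation C) (A : H →L[ℂ] H) :
    ‖conjOp C hC A‖ ≤ ‖A‖ :=
  LinearMap.mkContinuous_norm_le _ (norm_nonneg A) _

lemma conjOp_adjoint (C : H → H) (hC : IsConjugation C) (A : H →L[ℂ] H) :
    ContinuousLinearMap.adjoint (conjOp C hC A) =
      conjOp C hC (ContinuousLinearMap.adjoint A) := by
  symm
  rw [ContinuousLinearMap.eq_adjoint_iff]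
  intro x y
  rw [conjOp_apply, conjOp_apply]
  calc ⟪C (ContinuousLinearMap.adjoint A (C x)), y⟫
      = ⟪C (ContinuousLinearMap.adjoint A (C x)), C (C y)⟫ := by rw [hC.2.2.2]
    _ = ⟪C y, ContinuousLinearMap.adjoint A (C x)⟫ := hC.inner_conj _ _
    _ = ⟪A (C y), C x⟫ := ContinuousLinearMap.adjoint_inner_right _ _ _
    _ = ⟪C (C (A (C y))), C x⟫ := by rw [hC.2.2.2]
    _ = ⟪x, C (A (C y))⟫ := hC.inner_conj _ _

end Aux

set_option maxHeartbeats 2000000 in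
/-- for every contraction `K̃ : M⊥ → H` with range in the closure of the
range of `D_{V*}` whose adjoint extends `X₀ : D_{V*}(C h) ↦ P⊥(C(V h))`, the operator
`W̃ = (Ṽ_{K̃} + C Ṽ_{K̃}* C)/2`, with `Ṽ_{K̃} = V P_M + D_{V*} K̃ P⊥`, is a `C`-self-adjoint
contraction extending `V`. -/
theorem stmt_12 {H : Type*} [NormedAddCommGroup H] [InnerProductSpace ℂ H] [CompleteSpace H]
    (C : H → H) (hC : IsConjugation C)
    (M : Submodule ℂ H) [CompleteSpace M] (hproper : M ≠ ⊤)
    (V : M →L[ℂ] H)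
    (hV : ∀ x y : M, ⟪C (y : H), V x⟫ = ⟪C (V y), (x : H)⟫)
    (hVc : ‖V‖ ≤ 1)
    (D : H →L[ℂ] H) (hD : D.IsPositive)
    (hD2 : D ∘L D = ContinuousLinearMap.id ℂ H - V ∘L ContinuousLinearMap.adjoint V)
    (K : Mᗮ →L[ℂ] H) (hKc : ‖K‖ ≤ 1)
    (hKran : ∀ f : Mᗮ, K f ∈ closure (LinearMap.range (D : H →ₗ[ℂ] H) : Set H))
    (hKX : ∀ h : M, ((ContinuousLinearMap.adjoint K (D (C (h : H))) : H))
        = ((Submodule.orthogonalProjectionOnto Mᗮ (C (V h)) : H))) :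
    ∃ W : H →L[ℂ] H,
      (∀ x, W x = (2⁻¹ : ℂ) •
        ((V ∘L Submodule.orthogonalProjectionOnto M + (D ∘L K) ∘L Submodule.orthogonalProjectionOnto Mᗮ) x
          + C (ContinuousLinearMap.adjoint
              (V ∘L Submodule.orthogonalProjectionOnto M
                + (D ∘L K) ∘L Submodule.orthogonalProjectionOnto Mᗮ) (C x)))) ∧
      ‖W‖ ≤ 1 ∧
      (∀ h : M, W h = V h) ∧
      (∀ x, W x = C (ContinuousLinearMap.adjoint W (C x))) := by
  set T : H →L[ℂ] H :=
    V ∘L Submodule.orthogonalProjectionOnto M + (D ∘L K) ∘L Submodule.orthogonalProjectionOnto Mᗮ with hT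
  have hDsa : ContinuousLinearMap.adjoint D = D := ContinuousLinearMap.isSelfAdjoint_iff'.1 hD.isSelfAdjoint
  -- adjoint of T
  have hTadj : ∀ y : H, ContinuousLinearMap.adjoint T y =
      ((ContinuousLinearMap.adjoint V y : H)
        + (ContinuousLinearMap.adjoint K (D y) : H)) := by
    intro y
    rw [hT, map_add]
    simp only [ContinuousLinearMap.adjoint_comp, ContinuousLinearMap.add_apply,
      Submodule.adjoint_orthogonalProjectionOnto, hDsa]
    simp [ContinuousLinearMap.comp_apply, Submodule.coe_subtypeL]
  -- norm of D y
  have hDy : ∀ y : H, ‖D y‖ ^ 2 = ‖y‖ ^ 2 - ‖(ContinuousLinearMap.adjoint V y : M)‖ ^ 2 := by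
    intro y
    have h1 : ⟪D y, D y⟫ = ⟪y, (D ∘L D) y⟫ := by
      rw [ContinuousLinearMap.comp_apply]
      nth_rewrite 1 [← hDsa]
      exact ContinuousLinearMap.adjoint_inner_left D _ _
    rw [hD2] at h1
    have h2 : ⟪y, (ContinuousLinearMap.id ℂ H - V ∘L ContinuousLinearMap.adjoint V) y⟫
        = ⟪y, y⟫ - ⟪ContinuousLinearMap.adjoint V y, ContinuousLinearMap.adjoint V y⟫ := by
      simp only [ContinuousLinearMap.sub_apply, ContinuousLinearMap.id_apply,
        ContinuousLinearMap.comp_apply, inner_sub_right]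
      rw [← ContinuousLinearMap.adjoint_inner_left V]
    rw [h2] at h1
    rw [inner_self_eq_norm_sq_to_K, inner_self_eq_norm_sq_to_K,
      inner_self_eq_norm_sq_to_K] at h1
    exact_mod_cast h1
  -- adjoint T is a contraction pointwise
  have hTadjn : ∀ y : H, ‖ContinuousLinearMap.adjoint T y‖ ≤ ‖y‖ := by
    intro y
    have horth : ⟪((ContinuousLinearMap.adjoint V y : M) : H),
        ((ContinuousLinearMap.adjoint K (D y) : Mᗮ) : H)⟫ = 0 := by
      have hm := (ContinuousLinearMap.adjoint K (D y)).2
      exact (Submodule.mem_orthogonal _ _).1 hm _ (ContinuousLinearMap.adjoint V y).2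
    have hpyth : ‖ContinuousLinearMap.adjoint T y‖ ^ 2
        = ‖((ContinuousLinearMap.adjoint V y : M) : H)‖ ^ 2
          + ‖((ContinuousLinearMap.adjoint K (D y) : Mᗮ) : H)‖ ^ 2 := by
      rw [hTadj y, pow_two, pow_two, pow_two]
      exact norm_add_sq_eq_norm_sq_add_norm_sq_of_inner_eq_zero _ _ horth
    have hKb : ‖((ContinuousLinearMap.adjoint K (D y) : Mᗮ) : H)‖ ≤ ‖D y‖ := by
      have h1 : ‖ContinuousLinearMap.adjoint K (D y)‖
          ≤ ‖ContinuousLinearMap.adjoint K‖ * ‖D y‖ :=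
        (ContinuousLinearMap.adjoint K).le_opNorm _
      have h2 : ‖ContinuousLinearMap.adjoint K‖ = ‖K‖ :=
        ContinuousLinearMap.adjoint.norm_map K
      calc ‖((ContinuousLinearMap.adjoint K (D y) : Mᗮ) : H)‖
          = ‖ContinuousLinearMap.adjoint K (D y)‖ := rfl
        _ ≤ ‖ContinuousLinearMap.adjoint K‖ * ‖D y‖ := h1
        _ ≤ 1 * ‖D y‖ := by
            apply mul_le_mul_of_nonneg_right _ (norm_nonneg _)
            rw [h2]; exact hKc
        _ = ‖D y‖ := one_mul _
    have hsq : ‖ContinuousLinearMap.adjoint T y‖ ^ 2 ≤ ‖y‖ ^ 2 := by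
      rw [hpyth]
      have : ‖((ContinuousLinearMap.adjoint K (D y) : Mᗮ) : H)‖ ^ 2 ≤ ‖D y‖ ^ 2 :=
        pow_le_pow_left₀ (norm_nonneg _) hKb 2
      have hv : ‖((ContinuousLinearMap.adjoint V y : M) : H)‖
          = ‖(ContinuousLinearMap.adjoint V y : M)‖ := Submodule.norm_coe _
      rw [hv]
      nlinarith [hDy y]
    nlinarith [norm_nonneg (ContinuousLinearMap.adjoint T y), norm_nonneg y]
  have hTadjN : ‖ContinuousLinearMap.adjoint T‖ ≤ 1 :=
    ContinuousLinearMap.opNorm_le_bound _ zero_le_one (fun y => by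
      rw [one_mul]; exact hTadjn y)
  have hTn : ‖T‖ ≤ 1 := by
    have h := ContinuousLinearMap.adjoint.norm_map T
    linarith
  set S : H →L[ℂ] H := conjOp C hC (ContinuousLinearMap.adjoint T) with hS
  have hSapp : ∀ x, S x = C (ContinuousLinearMap.adjoint T (C x)) := fun x => rfl
  set W : H →L[ℂ] H := (2⁻¹ : ℂ) • (T + S) with hW
  have hWapp : ∀ x, W x = (2⁻¹ : ℂ) • (T x + S x) := fun x => rfl
  refine ⟨W, ?_, ?_, ?_, ?_⟩
  · intro x
    rw [hWapp x, hSapp x]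
  · have hSn : ‖S‖ ≤ 1 := le_trans (conjOp_norm_le _ _ _) hTadjN
    have h5 : ‖T + S‖ ≤ 2 := le_trans (norm_add_le _ _) (by linarith)
    rw [hW, norm_smul]
    have h6 : ‖(2⁻¹ : ℂ)‖ = 2⁻¹ := by norm_num
    rw [h6]
    linarith
  · intro h
    have hPh : Submodule.orthogonalProjectionOnto M ((h : M) : H) = h :=
      Submodule.orthogonalProjectionOnto_mem_subspace_eq_self h
    have hP'h : Submodule.orthogonalProjectionOnto Mᗮ ((h : M) : H) = 0 :=
      Submodule.orthogonalProjectionOnto_apply_of_mem_orthogonal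
        (M.le_orthogonal_orthogonal h.2)
    have hTh : T ((h : M) : H) = V h := by
      rw [hT]
      simp only [ContinuousLinearMap.add_apply, ContinuousLinearMap.comp_apply, hPh, hP'h]
      simp
    have hVadj : (ContinuousLinearMap.adjoint V (C ((h : M) : H)))
        = Submodule.orthogonalProjectionOnto M (C (V h)) := by
      apply ext_inner_left ℂ
      intro v
      rw [ContinuousLinearMap.adjoint_inner_right, Submodule.inner_orthogonalProjectionOnto_eq_of_mem_left]
      rw [← inner_conj_symm (V v) (C ((h : M) : H)), hV v h]
      exact inner_conj_symm _ _
    have hTadjCh : ContinuousLinearMap.adjoint T (C ((h : M) : H)) = C (V h) := by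
      rw [hTadj, hVadj, hKX h]
      exact Submodule.starProjection_add_starProjection_orthogonal (K := M) (C (V h))
    rw [hWapp, hSapp, hTadjCh, hC.2.2.2, hTh, ← two_smul ℂ (V h), smul_smul]
    norm_num
  · intro x
    have hconj2 : (starRingEnd ℂ) (2⁻¹ : ℂ) = 2⁻¹ := by
      norm_num [Complex.ext_iff]
    have hWadj : ContinuousLinearMap.adjoint W
        = (2⁻¹ : ℂ) • (ContinuousLinearMap.adjoint T + conjOp C hC T) := by
      rw [hW, map_smulₛₗ, map_add, hS, conjOp_adjoint, ContinuousLinearMap.adjoint_adjoint]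
      congr 1
    rw [hWadj, hWapp]
    simp only [ContinuousLinearMap.smul_apply, ContinuousLinearMap.add_apply, conjOp_apply]
    rw [hC.2.1, hC.1, hC.2.2.2, hSapp]
    rw [hconj2, hC.2.2.2, add_comm]
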